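/- Let R_B(s) = B − (sI − A) * V_m * X̃_B(s) and R_C(s) = C^T − (sI − A)^T * W_m * X̃_C(s), where X̃_B(s) = (sI_m − A_m)^{-1} * B_m and X̃_C(s) = (sI_m − A_m)^{-T} * C_m^T, with A_m = W_m^T * A * V_m, B_m = W_m^T * B, C_m = C * V_m and W_m^T * V_m = I_m. Then the error between the transfer functions satisfies F(s) − F_m(s) = R_C(s)^T * (sI − A)^{-1} * R_B(s). -/
import Mathlib


open Matrix

/-- Multi-index type: an `N`-tuple of indices with mode sizes `d i`. -/
abbrev Idx {N : ℕ} (d : Fin N → ℕ) : Type := ∀ i, Fin (d i)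

/-- The Einstein product, contracting over the middle multi-index `K`:
`(A *_M B)_{j,i} = ∑_k A_{j,k} B_{k,i}`. -/
def eprod {J K I : Type*} [Fintype K] (A : Matrix J K ℝ) (B : Matrix K I ℝ) :
    Matrix J I ℝ :=
  Matrix.of fun j i => ∑ k, A j k * B k i

/-- The identity (diagonal) tensor. -/
def idT (J : Type*) [DecidableEq J] : Matrix J J ℝ :=
  Matrix.of fun j i => if j = i then 1 else 0

lemma eprod_eq {J K I : Type*} [Fintype K] (A : Matrix J K ℝ) (B : Matrix K I ℝ) :
    eprod A B = A * B := by
  ext j i; simp [eprod, Matrix.mul_apply]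

lemma idT_eq (J : Type*) [DecidableEq J] : idT J = 1 := by
  ext j i; simp [idT, Matrix.one_apply]

/-- the error between the transfer functions equals
R_C(s)ᵀ * (sI − A)⁻¹ * R_B(s) in the rational block Lanczos (oblique projection)
setting. -/
theorem transfer_function_error_residual_form {J1 J2 K1 K2 I1 I2 m : ℕ}
    (A : Matrix (Fin J1 × Fin J2) (Fin J1 × Fin J2) ℝ)
    (B : Matrix (Fin J1 × Fin J2) (Fin K1 × Fin K2) ℝ)
    (C : Matrix (Fin I1 × Fin I2) (Fin J1 × Fin J2) ℝ)
    (V W : Matrix (Fin J1 × Fin J2) (Fin K1 × Fin (m * K2)) ℝ)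
    (s : ℝ)
    -- reduced tensors A_m = Wᵀ A V, B_m = Wᵀ B, C_m = C V :
    (Am : Matrix (Fin K1 × Fin (m * K2)) (Fin K1 × Fin (m * K2)) ℝ)
    (Bm : Matrix (Fin K1 × Fin (m * K2)) (Fin K1 × Fin K2) ℝ)
    (Cm : Matrix (Fin I1 × Fin I2) (Fin K1 × Fin (m * K2)) ℝ)
    (hAm : Am = eprod Wᵀ (eprod A V)) (hBm : Bm = eprod Wᵀ B) (hCm : Cm = eprod C V)
    -- bi-orthonormality Wᵀ V = I_m :
    (hbi : eprod Wᵀ V = idT (Fin K1 × Fin (m * K2)))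
    -- Rinv = (sI − A)⁻¹ and Rm = (sI_m − A_m)⁻¹ (two-sided inverses) :
    (Rinv : Matrix (Fin J1 × Fin J2) (Fin J1 × Fin J2) ℝ)
    (hRinv : eprod (s • idT (Fin J1 × Fin J2) - A) Rinv = idT (Fin J1 × Fin J2) ∧
             eprod Rinv (s • idT (Fin J1 × Fin J2) - A) = idT (Fin J1 × Fin J2))
    (Rm : Matrix (Fin K1 × Fin (m * K2)) (Fin K1 × Fin (m * K2)) ℝ)
    (hRm : eprod (s • idT (Fin K1 × Fin (m * K2)) - Am) Rm = idT (Fin K1 × Fin (m * K2)) ∧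
           eprod Rm (s • idT (Fin K1 × Fin (m * K2)) - Am) = idT (Fin K1 × Fin (m * K2)))
    -- X̃_B = (sI_m − A_m)⁻¹ B_m and X̃_C = (sI_m − A_m)⁻ᵀ C_mᵀ :
    (XB : Matrix (Fin K1 × Fin (m * K2)) (Fin K1 × Fin K2) ℝ)
    (XC : Matrix (Fin K1 × Fin (m * K2)) (Fin I1 × Fin I2) ℝ)
    (hXB : XB = eprod Rm Bm) (hXC : XC = eprod Rmᵀ Cmᵀ)
    -- residuals R_B(s) and R_C(s) :
    (RB : Matrix (Fin J1 × Fin J2) (Fin K1 × Fin K2) ℝ)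
    (RC : Matrix (Fin J1 × Fin J2) (Fin I1 × Fin I2) ℝ)
    (hRB : RB = B - eprod (eprod (s • idT (Fin J1 × Fin J2) - A) V) XB)
    (hRC : RC = Cᵀ - eprod (eprod (s • idT (Fin J1 × Fin J2) - A)ᵀ W) XC) :
    eprod (eprod C Rinv) B - eprod (eprod Cm Rm) Bm
      = eprod (eprod RCᵀ Rinv) RB := by
  simp only [eprod_eq, idT_eq] at *
  obtain ⟨hR1, hR2⟩ := hRinv
  obtain ⟨hM1, hM2⟩ := hRm
  set E := s • (1 : Matrix (Fin J1 × Fin J2) (Fin J1 × Fin J2) ℝ) - A with hE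
  set Em := s • (1 : Matrix (Fin K1 × Fin (m * K2)) (Fin K1 × Fin (m * K2)) ℝ) - Am with hEm
  have hWEV : Wᵀ * E * V = Em := by
    rw [hE, hEm, hAm]
    simp [Matrix.mul_sub, Matrix.sub_mul, Matrix.mul_smul, Matrix.smul_mul, hbi,
      Matrix.mul_assoc]
  subst hRB hRC hXB hXC hBm hCm
  have hRCt : (Cᵀ - Eᵀ * W * (Rmᵀ * (C * V)ᵀ))ᵀ
      = C - (C * V) * Rm * (Wᵀ * E) := by
    simp [Matrix.transpose_mul, Matrix.mul_assoc]
  rw [hRCt]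
  have expand : (C - C * V * Rm * (Wᵀ * E)) * Rinv * (B - E * V * (Rm * (Wᵀ * B)))
      = C * Rinv * B - C * V * Rm * (Wᵀ * B)
        - C * V * Rm * (Wᵀ * B) + C * V * Rm * (Wᵀ * B) := by
    have h1 : C * Rinv * (E * V * (Rm * (Wᵀ * B))) = C * V * Rm * (Wᵀ * B) := by
      calc C * Rinv * (E * V * (Rm * (Wᵀ * B)))
          = C * ((Rinv * E) * (V * (Rm * (Wᵀ * B)))) := by
            simp [Matrix.mul_assoc]
        _ = C * V * Rm * (Wᵀ * B) := by rw [hR2]; simp [Matrix.mul_assoc]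
    have h2 : C * V * Rm * (Wᵀ * E) * Rinv * B = C * V * Rm * (Wᵀ * B) := by
      calc C * V * Rm * (Wᵀ * E) * Rinv * B
          = C * V * Rm * Wᵀ * (E * Rinv) * B := by simp [Matrix.mul_assoc]
        _ = C * V * Rm * (Wᵀ * B) := by rw [hR1]; simp [Matrix.mul_assoc]
    have h3 : C * V * Rm * (Wᵀ * E) * Rinv * (E * V * (Rm * (Wᵀ * B)))
        = C * V * Rm * (Wᵀ * B) := by
      calc C * V * Rm * (Wᵀ * E) * Rinv * (E * V * (Rm * (Wᵀ * B)))
          = C * V * (Rm * ((Wᵀ * E) * ((Rinv * E) * (V * (Rm * (Wᵀ * B)))))) := by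
            simp [Matrix.mul_assoc]
        _ = C * V * (Rm * (Wᵀ * E * V * (Rm * (Wᵀ * B)))) := by
            rw [hR2]; simp [Matrix.mul_assoc]
        _ = C * V * ((Rm * Em) * (Rm * (Wᵀ * B))) := by
            rw [hWEV]; simp [Matrix.mul_assoc]
        _ = C * V * Rm * (Wᵀ * B) := by rw [hM2]; simp [Matrix.mul_assoc]
    rw [Matrix.sub_mul, Matrix.sub_mul, Matrix.mul_sub, Matrix.mul_sub]
    rw [h1, h2, h3]
    abel
  rw [expand]
  have : (C * V) * Rm * (Wᵀ * B) = C * V * Rm * (Wᵀ * B) := rfl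
  rw [Matrix.mul_assoc (C * V) Rm (Wᵀ * B)]
  abel
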